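/- Suppose the embedded jump chain is recurrent. Let f ∈ Dom_+(Γ) with f → ∞ and assume there exist constants a > 0, c > 0, ε > 0 and r > 1 such that f^r ∈ Dom_+(Γ), Γf(x) ≥ −ε for all x ∉ {f ≤ a}, and Γf^r(x) ≤ c·f(x)^{r−1} for all x ∉ {f ≤ a}. Then the chain does not implode towards {f ≤ a}: there is no constant K > 0 such that E_x(τ_{{f ≤ a}}) ≤ K for all x ∉ {f ≤ a}. -/

import Mathlib

open MeasureTheory Set Filter
open scoped Classical ENNReal NNReal

/-- A continuous-time Markov chain on a countably infinite state space `X`,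
described by its generator `Γ`, together with a probability space carrying,
for each starting point `x`, the embedded jump chain `jump` and the holding
times `hold` (with `hold n` the holding time at the `n`-th visited state). -/
structure CTMC where
  X : Type
  countX : Countable X
  infX : Infinite X
  Γ : X → X → ℝ
  γ : X → ℝ
  γ_pos : ∀ x, 0 < γ x
  Γ_offdiag_nonneg : ∀ x y, y ≠ x → 0 ≤ Γ x y
  Γ_diag : ∀ x, Γ x x = - γ x
  γ_sum : ∀ x, HasSum (fun y => if y = x then 0 else Γ x y) (γ x)
  /-- irreducibility of the embedded jump chain -/
  irr : ∀ x y : X, ∃ (n : ℕ) (path : ℕ → X), path 0 = x ∧ path n = y ∧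
    ∀ k, k < n → 0 < (if path (k+1) = path k then 0
      else Γ (path k) (path (k+1)) / γ (path k))
  Ω : Type
  measΩ : MeasurableSpace Ω
  μ : X → @Measure Ω measΩ
  probμ : ∀ x, @IsProbabilityMeasure Ω measΩ (μ x)
  jump : ℕ → Ω → X
  hold : ℕ → Ω → ℝ
  jump_meas : ∀ (n : ℕ) (x : X), MeasurableSet[measΩ] {ω | jump n ω = x}
  hold_meas : ∀ n : ℕ, @Measurable Ω ℝ measΩ _ (hold n)
  hold_pos : ∀ n ω, 0 < hold n ω
  /-- under `μ x` the chain starts at `x` -/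
  start : ∀ x : X, μ x {ω | jump 0 ω = x} = 1
  /-- finite-dimensional law: the embedded chain is Markov with transition
  probabilities `P x y = Γ x y / γ x` (for `y ≠ x`), and conditionally on the
  embedded chain the holding times are independent exponentials of rates
  `γ (jump n)` -/
  law : ∀ (x : X) (n : ℕ) (path : ℕ → X) (t : ℕ → ℝ), path 0 = x → (∀ k, 0 ≤ t k) →
    μ x {ω | (∀ k, k ≤ n → jump k ω = path k) ∧ (∀ k, k < n → t k < hold k ω)}
      = ENNReal.ofReal (∏ k ∈ Finset.range n,
          ((if path (k+1) = path k then 0 else Γ (path k) (path (k+1)) / γ (path k))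
            * Real.exp (-(γ (path k)) * t k)))

namespace CTMC

attribute [instance] CTMC.countX CTMC.infX CTMC.measΩ CTMC.probμ

variable (M : CTMC)

/-- embedded chain transition probabilities -/
noncomputable def P (x y : M.X) : ℝ := if y = x then 0 else M.Γ x y / M.γ x

/-- jump times -/
noncomputable def J (n : ℕ) (ω : M.Ω) : ℝ := ∑ k ∈ Finset.range n, M.hold k ω

/-- explosion (life) time -/
noncomputable def zeta (ω : M.Ω) : ℝ≥0∞ := ⨆ n, ENNReal.ofReal (M.J n ω)

/-- the continuous-time chain: `pos t ω = some (jump n ω)` if `J n ≤ t < J (n+1)`,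
and `none` (the cemetery state `∂`) after the explosion time. -/
noncomputable def pos (t : ℝ) (ω : M.Ω) : Option M.X :=
  if h : ∃ n, M.J n ω ≤ t ∧ t < M.J (n+1) ω then some (M.jump h.choose ω) else none

/-- passage time: `τ_A = inf {t ≥ 0 : ξ_t ∈ A}` -/
noncomputable def tau (A : Set M.X) (ω : M.Ω) : ℝ≥0∞ :=
  sInf (ENNReal.ofReal '' {s : ℝ | 0 ≤ s ∧ ∃ a ∈ A, M.pos s ω = some a})

/-- `f` belongs to the domain of the generator -/
def InDom (f : M.X → ℝ) : Prop :=
  ∀ x : M.X, Summable (fun y => if y = x then 0 else M.Γ x y * f y)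

/-- `f ∈ Dom_+(Γ)` -/
def InDomPos (f : M.X → ℝ) : Prop := (∀ x, 0 ≤ f x) ∧ M.InDom f

/-- action of the generator : `Γ f (x) = ∑_y Γ_{xy} f(y)` -/
noncomputable def gen (f : M.X → ℝ) (x : M.X) : ℝ :=
  (∑' y, if y = x then 0 else M.Γ x y * f y) - M.γ x * f x

/-- recurrence of the embedded jump chain -/
def JumpRecurrent : Prop := ∀ x : M.X, M.μ x {ω | ∃ n, 1 ≤ n ∧ M.jump n ω = x} = 1

/-- `f → ∞` : all sublevel sets are finite -/
def FinSublevels (f : M.X → ℝ) : Prop := ∀ r : ℝ, {x : M.X | f x ≤ r}.Finite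

end CTMC

/-!
Suppose `E_x τ ≤ K` for all `x` with `f x > a`. Pick `x₀` with `f x₀` large and put
`b = f x₀ ^ (r / (r - 1))`, so that `b ^ (r - 1) = f x₀ ^ r`. On the finite set
`S = {a < f ≤ b}` the function `V = a + f ^ r / f x₀ ^ r - f` has drift at most `c + ε`; it is
nonnegative off `S` (where `f > b` it dominates `a` because `f ≤ f ^ r / b ^ (r - 1)`), and
`V x₀ = a + 1 - f x₀`. Dynkin's formula for the jump chain killed on leaving `S`, in which each
visit to `y` is weighted by the mean holding time `1 / γ y`, gives `-V x₀ ≤ (c + ε) K`: the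
mass still inside `S` after `n` jumps tends to `0` because the expected time spent in `S` is
at most `K`. Hence `f x₀ ≤ a + 1 + (c + ε) K`, which fails for `f x₀` large as `f → ∞`.
-/

def seqCons {α : Type*} (x : α) (s : ℕ → α) : ℕ → α
  | 0 => x
  | j + 1 => s j

@[simp] lemma seqCons_zero {α : Type*} (x : α) (s : ℕ → α) : seqCons x s 0 = x := rfl

@[simp] lemma seqCons_succ {α : Type*} (x : α) (s : ℕ → α) (j : ℕ) :
    seqCons x s (j + 1) = s j := rfl

lemma le_rpow_div_rpow_sub_one {b t r : ℝ} (hb : 0 < b) (hbt : b ≤ t) (hr : 1 ≤ r) :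
    t ≤ t ^ r / b ^ (r - 1) := by
  rw [le_div_iff₀ (by positivity)]
  calc t * b ^ (r - 1) ≤ t * t ^ (r - 1) := by gcongr; linarith
    _ = t ^ r := by rw [← Real.rpow_one_add' (by linarith) (by linarith)]; norm_num

noncomputable def lyapunov {α : Type*} (f : α → ℝ) (a r F : ℝ) (y : α) : ℝ :=
  a + (f y ^ r / F - f y)

section Lyapunov

variable {α : Type*} {f : α → ℝ} {a b r : ℝ} {y : α}

lemma lyapunov_nonneg (ha : 0 ≤ a) (hfy : 0 ≤ f y) (hb : 0 < b) (hr : 1 ≤ r)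
    (hy : f y ≤ a ∨ b < f y) : 0 ≤ lyapunov f a r (b ^ (r - 1)) y := by
  have : 0 ≤ f y ^ r / b ^ (r - 1) := by positivity
  rcases hy with hy | hy
  · unfold lyapunov; linarith
  · have := le_rpow_div_rpow_sub_one hb hy.le hr
    unfold lyapunov; linarith

lemma neg_le_lyapunov (ha : 0 ≤ a) (hfy : 0 ≤ f y) (hy : f y ≤ b) :
    -b ≤ lyapunov f a r (b ^ (r - 1)) y := by
  have : 0 ≤ f y ^ r / b ^ (r - 1) := by have := hfy.trans hy; positivity
  unfold lyapunov; linarith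

end Lyapunov

namespace CTMC

open Finset

section Generator

variable {M : CTMC} {f : M.X → ℝ} {a r F : ℝ}

lemma P_nonneg (x y : M.X) : 0 ≤ M.P x y := by
  unfold P
  split_ifs with h
  exacts [le_rfl, div_nonneg (M.Γ_offdiag_nonneg x y h) (M.γ_pos x).le]

lemma hasSum_P (x : M.X) : HasSum (M.P x) 1 := by
  have h := (M.γ_sum x).div_const (M.γ x)
  rw [div_self (M.γ_pos x).ne'] at h
  refine h.congr_fun fun y => ?_
  unfold P
  split_ifs <;> simp

lemma P_mul_eq_div (x : M.X) (h : M.X → ℝ) :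
    (fun y => M.P x y * h y) = fun y => (if y = x then 0 else M.Γ x y * h y) / M.γ x := by
  ext y
  unfold P
  split_ifs <;> ring

lemma InDom.summable_P_mul {h : M.X → ℝ} (hh : M.InDom h) (x : M.X) :
    Summable fun y => M.P x y * h y := by
  rw [P_mul_eq_div]
  exact (hh x).div_const _

lemma tsum_P_mul (h : M.X → ℝ) (x : M.X) :
    ∑' y, M.P x y * h y = h x + M.gen h x / M.γ x := by
  rw [P_mul_eq_div, tsum_div_const, gen]
  field_simp [(M.γ_pos x).ne']
  ring

lemma hasSum_lyapunov (hf : M.InDom f) (hfr : M.InDom fun y => f y ^ r) (x : M.X) :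
    HasSum (fun y => if y = x then 0 else M.Γ x y * lyapunov f a r F y)
      (M.γ x * a + (∑' y, if y = x then 0 else M.Γ x y * f y ^ r) / F
        - ∑' y, if y = x then 0 else M.Γ x y * f y) := by
  refine (((M.γ_sum x).mul_right a).add ((hfr x).hasSum.div_const F)).sub (hf x).hasSum
    |>.congr_fun fun y => ?_
  unfold lyapunov
  split_ifs <;> ring

lemma inDom_lyapunov (hf : M.InDom f) (hfr : M.InDom fun y => f y ^ r) :
    M.InDom (lyapunov f a r F) :=
  fun x => (hasSum_lyapunov hf hfr x).summable

lemma gen_lyapunov (hf : M.InDom f) (hfr : M.InDom fun y => f y ^ r) (x : M.X) :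
    M.gen (lyapunov f a r F) x = M.gen (fun y => f y ^ r) x / F - M.gen f x := by
  simp only [gen]
  rw [(hasSum_lyapunov hf hfr x).tsum_eq]
  simp only [lyapunov]
  ring

end Generator

variable (M : CTMC)

/-- `M.killed S x₀ k y` is the probability that the jump chain started at `x₀` is in `S` at
steps `0, …, k - 1` and at `y` at step `k`. -/
noncomputable def killed (S : Finset M.X) (x₀ : M.X) : ℕ → M.X → ℝ
  | 0 => fun y => if y = x₀ then 1 else 0
  | k + 1 => fun y => ∑ x ∈ S, killed S x₀ k x * M.P x y

/-- The expected time the chain started at `x₀` spends in `S`, before its `n`-th jump and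
before it first leaves `S`. -/
noncomputable def occupation (S : Finset M.X) (x₀ : M.X) (n : ℕ) : ℝ :=
  ∑ k ∈ range n, ∑ y ∈ S, M.killed S x₀ k y / M.γ y

variable {M} {S : Finset M.X} {x₀ : M.X}

lemma killed_nonneg (k : ℕ) (y : M.X) : 0 ≤ M.killed S x₀ k y := by
  induction k generalizing y with
  | zero => unfold killed; split_ifs <;> norm_num
  | succ k ih => exact sum_nonneg fun x _ => mul_nonneg (ih x) (P_nonneg x y)

lemma sum_killed_zero_mul (hx₀ : x₀ ∈ S) (h : M.X → ℝ) :
    ∑ y ∈ S, M.killed S x₀ 0 y * h y = h x₀ := by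
  simp [killed, hx₀]

lemma killed_succ_mul (k : ℕ) (h : M.X → ℝ) (y : M.X) :
    M.killed S x₀ (k + 1) y * h y = ∑ x ∈ S, M.killed S x₀ k x * (M.P x y * h y) := by
  simp only [killed, sum_mul, mul_assoc]

lemma InDom.summable_killed_mul {h : M.X → ℝ} (hh : M.InDom h) (k : ℕ) :
    Summable fun y => M.killed S x₀ (k + 1) y * h y := by
  simp only [killed_succ_mul]
  exact summable_sum fun x _ => (hh.summable_P_mul x).mul_left _

lemma InDom.sum_killed_succ_mul_add_tsum_compl {h : M.X → ℝ} (hh : M.InDom h) (k : ℕ) :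
    ∑ y ∈ S, M.killed S x₀ (k + 1) y * h y
      + ∑' y : ↥(S : Set M.X)ᶜ, M.killed S x₀ (k + 1) y * h y
      = ∑ x ∈ S, M.killed S x₀ k x * (h x + M.gen h x / M.γ x) := by
  rw [(hh.summable_killed_mul k).sum_add_tsum_compl]
  simp only [killed_succ_mul]
  rw [Summable.tsum_finsetSum fun x _ => (hh.summable_P_mul x).mul_left _]
  exact sum_congr rfl fun x _ => by rw [tsum_mul_left, tsum_P_mul]

/-- Dynkin's formula for the killed jump chain, in the form of an inequality. -/
lemma InDom.sum_killed_mul_add_exits_le {h : M.X → ℝ} (hh : M.InDom h) (hx₀ : x₀ ∈ S)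
    {C : ℝ} (hgen : ∀ x ∈ S, M.gen h x ≤ C) (n : ℕ) :
    ∑ y ∈ S, M.killed S x₀ n y * h y
      + ∑ k ∈ range n, ∑' y : ↥(S : Set M.X)ᶜ, M.killed S x₀ (k + 1) y * h y
      ≤ h x₀ + C * M.occupation S x₀ n := by
  induction n with
  | zero => simp [sum_killed_zero_mul hx₀, occupation]
  | succ n ih =>
    have hstep : ∑ x ∈ S, M.killed S x₀ n x * (h x + M.gen h x / M.γ x)
        ≤ ∑ y ∈ S, M.killed S x₀ n y * h y
          + C * ∑ y ∈ S, M.killed S x₀ n y / M.γ y := by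
      rw [mul_sum, ← sum_add_distrib]
      refine sum_le_sum fun x hx => ?_
      have := mul_le_mul_of_nonneg_left
        (div_le_div_of_nonneg_right (hgen x hx) (M.γ_pos x).le)
        (killed_nonneg (S := S) (x₀ := x₀) n x)
      calc _ = M.killed S x₀ n x * h x + M.killed S x₀ n x * (M.gen h x / M.γ x) := by ring
        _ ≤ M.killed S x₀ n x * h x + M.killed S x₀ n x * (C / M.γ x) := by linarith
        _ = _ := by ring
    rw [sum_range_succ, occupation, sum_range_succ, mul_add, ← occupation]
    linarith [hh.sum_killed_succ_mul_add_tsum_compl (S := S) (x₀ := x₀) n]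

lemma tendsto_sum_killed {K : ℝ} (hocc : ∀ n, M.occupation S x₀ n ≤ K) :
    Tendsto (fun n => ∑ y ∈ S, M.killed S x₀ n y) atTop (nhds 0) := by
  obtain ⟨G, hG⟩ := (S.image M.γ).bddAbove
  have hsum : Summable fun k => ∑ y ∈ S, M.killed S x₀ k y / M.γ y :=
    summable_of_sum_range_le
      (fun k => sum_nonneg fun y _ => div_nonneg (killed_nonneg k y) (M.γ_pos y).le) hocc
  refine squeeze_zero (fun n => sum_nonneg fun y _ => killed_nonneg n y) (fun n => ?_)
    (by simpa using hsum.tendsto_atTop_zero.const_mul G)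
  rw [mul_sum]
  refine sum_le_sum fun y hy => ?_
  have hγG : M.γ y ≤ G := hG (mem_coe.2 (mem_image_of_mem _ hy))
  rw [mul_div_assoc', le_div_iff₀ (M.γ_pos y), mul_comm G]
  exact mul_le_mul_of_nonneg_left hγG (killed_nonneg n y)

theorem InDom.neg_le_mul_of_gen_le {V : M.X → ℝ} (hV : M.InDom V) (hx₀ : x₀ ∈ S)
    {B C K : ℝ} (hC : 0 ≤ C) (hgen : ∀ x ∈ S, M.gen V x ≤ C)
    (hin : ∀ y ∈ S, -B ≤ V y) (hout : ∀ y ∉ S, 0 ≤ V y) (hocc : ∀ n, M.occupation S x₀ n ≤ K) :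
    -V x₀ ≤ C * K := by
  have hbound : ∀ n, -B * ∑ y ∈ S, M.killed S x₀ n y ≤ V x₀ + C * K := fun n => by
    have hexits :
        0 ≤ ∑ k ∈ range n, ∑' y : ↥(S : Set M.X)ᶜ, M.killed S x₀ (k + 1) y * V y :=
      sum_nonneg fun k _ => tsum_nonneg fun y =>
        mul_nonneg (killed_nonneg _ _) (hout y fun h => y.2 h)
    have hkept :
        -B * ∑ y ∈ S, M.killed S x₀ n y ≤ ∑ y ∈ S, M.killed S x₀ n y * V y := by
      rw [mul_sum]
      exact sum_le_sum fun y hy => by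
        rw [mul_comm]; exact mul_le_mul_of_nonneg_left (hin y hy) (killed_nonneg n y)
    linarith [hV.sum_killed_mul_add_exits_le hx₀ hgen n, mul_le_mul_of_nonneg_left (hocc n) hC]
  have := le_of_tendsto' ((tendsto_sum_killed hocc).const_mul (-B)) hbound
  rw [mul_zero] at this
  linarith

variable (M) in
def cylinder (S : Finset M.X) (k m : ℕ) (path : ℕ → M.X) (t : ℕ → ℝ) : Set M.Ω :=
  {ω | (∀ i < k, M.jump i ω ∈ S) ∧ (∀ j ≤ m, M.jump (k + j) ω = path j) ∧
    ∀ j < m, t j < M.hold (k + j) ω}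

lemma measurableSet_jump_mem (n : ℕ) (A : Set M.X) : MeasurableSet {ω | M.jump n ω ∈ A} := by
  have : {ω | M.jump n ω ∈ A} = ⋃ x ∈ A, {ω | M.jump n ω = x} := by ext; simp
  rw [this]
  exact .biUnion A.to_countable fun x _ => M.jump_meas n x

lemma measurableSet_cylinder (k m : ℕ) (path : ℕ → M.X) (t : ℕ → ℝ) :
    MeasurableSet (M.cylinder S k m path t) := by
  simp only [cylinder, ofPred_and, ofPred_forall]
  exact .inter (.iInter fun i => .iInter fun _ => measurableSet_jump_mem i _)
    (.inter (.iInter fun j => .iInter fun _ => M.jump_meas _ _)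
      (.iInter fun j => .iInter fun _ => measurableSet_lt measurable_const (M.hold_meas _)))

lemma cylinder_succ (k m : ℕ) (path : ℕ → M.X) (t : ℕ → ℝ) :
    M.cylinder S (k + 1) m path t
      = ⋃ x ∈ S, M.cylinder S k (m + 1) (seqCons x path) (seqCons 0 t) := by
  ext ω
  simp only [cylinder, mem_iUnion, mem_ofPred_eq, exists_prop]
  constructor
  · rintro ⟨hS, hpath, ht⟩
    refine ⟨M.jump k ω, hS k k.lt_succ_self, fun i hi => hS i (by omega), ?_, ?_⟩
    · rintro (_ | j) hj
      · rfl
      · rw [show k + (j + 1) = k + 1 + j by omega]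
        exact hpath j (by omega)
    · rintro (_ | j) hj
      · exact M.hold_pos _ _
      · rw [show k + (j + 1) = k + 1 + j by omega]
        exact ht j (by omega)
  · rintro ⟨x, hx, hS, hpath, ht⟩
    refine ⟨fun i hi => ?_, fun j hj => ?_, fun j hj => ?_⟩
    · rcases Nat.lt_succ_iff_lt_or_eq.1 hi with hi | rfl
      · exact hS i hi
      · rw [← add_zero i, hpath 0 (Nat.zero_le _)]
        exact hx
    · rw [show k + 1 + j = k + (j + 1) by omega]
      exact hpath (j + 1) (by omega)
    · rw [show k + 1 + j = k + (j + 1) by omega]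
      exact ht (j + 1) (by omega)

lemma measure_cylinder (k m : ℕ) (path : ℕ → M.X) (t : ℕ → ℝ) (ht : ∀ j, 0 ≤ t j) :
    M.μ x₀ (M.cylinder S k m path t) = ENNReal.ofReal (M.killed S x₀ k (path 0) *
      ∏ j ∈ range m, (M.P (path j) (path (j + 1)) * Real.exp (-M.γ (path j) * t j))) := by
  induction k generalizing m path t with
  | zero =>
    by_cases hp : path 0 = x₀
    · have hlaw := M.law x₀ m path t hp ht
      simp only [cylinder, not_lt_zero, IsEmpty.forall_iff, implies_true, zero_add, true_and]
      simp only [killed, if_pos hp, one_mul]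
      exact hlaw
    · have hnull : M.μ x₀ (M.cylinder S 0 m path t) = 0 := by
        refine measure_mono_null (fun ω hω => ?_)
          ((prob_compl_eq_zero_iff (M.jump_meas 0 x₀)).2 (M.start x₀))
        have h0 := hω.2.1 0 (Nat.zero_le _)
        exact fun h => hp (h0 ▸ h)
      simp [hnull, killed, hp]
  | succ k ih =>
    have hdisj : (S : Set M.X).PairwiseDisjoint
        fun x => M.cylinder S k (m + 1) (seqCons x path) (seqCons 0 t) :=
      fun x _ y _ hxy => Set.disjoint_left.2 fun ω hx hy =>
        hxy ((hx.2.1 0 (Nat.zero_le _)).symm.trans (hy.2.1 0 (Nat.zero_le _)))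
    have hcons : ∀ j, 0 ≤ seqCons (0 : ℝ) t j := by rintro (_ | j); exacts [le_rfl, ht j]
    have hterm : ∀ x ∈ S,
        M.μ x₀ (M.cylinder S k (m + 1) (seqCons x path) (seqCons 0 t))
          = ENNReal.ofReal (M.killed S x₀ k x * M.P x (path 0) *
            ∏ j ∈ range m, (M.P (path j) (path (j + 1)) * Real.exp (-M.γ (path j) * t j))) :=
      fun x _ => by
        rw [ih (m + 1) _ _ hcons, prod_range_succ']
        simp only [seqCons_zero, seqCons_succ, mul_zero, Real.exp_zero, mul_one]
        ring_nf
    rw [cylinder_succ, measure_biUnion_finset hdisj fun x _ => measurableSet_cylinder _ _ _ _,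
      sum_congr rfl hterm, ← ENNReal.ofReal_sum_of_nonneg fun x _ => mul_nonneg
        (mul_nonneg (killed_nonneg _ _) (P_nonneg _ _))
        (prod_nonneg fun j _ => mul_nonneg (P_nonneg _ _) (Real.exp_pos _).le),
      ← sum_mul]
    rfl

variable (M) in
def killedEvent (S : Finset M.X) (k : ℕ) (y : M.X) : Set M.Ω :=
  {ω | (∀ i < k, M.jump i ω ∈ S) ∧ M.jump k ω = y}

lemma measure_killedEvent_inter_hold_gt (k : ℕ) (y : M.X) {s : ℝ} (hs : 0 ≤ s) :
    M.μ x₀ (M.killedEvent S k y ∩ {ω | s < M.hold k ω})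
      = ENNReal.ofReal (M.killed S x₀ k y * Real.exp (-M.γ y * s)) := by
  have hunion : M.killedEvent S k y ∩ {ω | s < M.hold k ω}
      = ⋃ z, M.cylinder S k 1 (seqCons y fun _ => z) fun _ => s := by
    ext ω
    simp only [killedEvent, cylinder, mem_inter_iff, mem_iUnion, mem_ofPred_eq,
      Nat.le_one_iff_eq_zero_or_eq_one, Nat.lt_one_iff, forall_eq_or_imp, forall_eq]
    exact ⟨fun ⟨⟨hS, hy⟩, ht⟩ => ⟨M.jump (k + 1) ω, hS, ⟨hy, rfl⟩, ht⟩,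
      fun ⟨_, hS, ⟨hy, _⟩, ht⟩ => ⟨⟨hS, hy⟩, ht⟩⟩
  have hdisj : Pairwise (Function.onFun Disjoint
      fun z => M.cylinder S k 1 (seqCons y fun _ => z) fun _ => s) :=
    fun z z' hzz' => Set.disjoint_left.2 fun ω hz hz' =>
      hzz' ((hz.2.1 1 le_rfl).symm.trans (hz'.2.1 1 le_rfl))
  have hterm : ∀ z, M.μ x₀ (M.cylinder S k 1 (seqCons y fun _ => z) fun _ => s)
      = ENNReal.ofReal (M.killed S x₀ k y * Real.exp (-M.γ y * s)) * ENNReal.ofReal (M.P y z) :=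
    fun z => by
      rw [measure_cylinder _ _ _ _ fun _ => hs, prod_range_one, ← ENNReal.ofReal_mul
        (mul_nonneg (killed_nonneg k y) (Real.exp_pos _).le)]
      simp only [seqCons_zero, seqCons_succ]
      ring_nf
  rw [hunion, measure_iUnion hdisj fun z => measurableSet_cylinder _ _ _ _, tsum_congr hterm,
    ENNReal.tsum_mul_left, ← ENNReal.ofReal_tsum_of_nonneg (P_nonneg y) (hasSum_P y).summable,
    (hasSum_P y).tsum_eq, ENNReal.ofReal_one, mul_one]

lemma measurableSet_killedEvent (k : ℕ) (y : M.X) : MeasurableSet (M.killedEvent S k y) := by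
  simp only [killedEvent, ofPred_and, ofPred_forall]
  exact .inter (.iInter fun i => .iInter fun _ => measurableSet_jump_mem i _) (M.jump_meas k y)

lemma setLIntegral_killedEvent_hold (k : ℕ) (y : M.X) :
    ∫⁻ ω in M.killedEvent S k y, ENNReal.ofReal (M.hold k ω) ∂M.μ x₀
      = ENNReal.ofReal (M.killed S x₀ k y / M.γ y) := by
  rw [lintegral_eq_lintegral_meas_lt _ (ae_of_all _ fun ω => (M.hold_pos k ω).le)
    (M.hold_meas k).aemeasurable]
  rw [setLIntegral_congr_fun measurableSet_Ioi fun t ht => by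
    rw [Measure.restrict_apply (measurableSet_lt measurable_const (M.hold_meas k)), inter_comm,
      measure_killedEvent_inter_hold_gt k y (le_of_lt ht)]]
  rw [← ofReal_integral_eq_lintegral_ofReal
    ((exp_neg_integrableOn_Ioi 0 (M.γ_pos y)).const_mul _)
    (ae_of_all _ fun t => mul_nonneg (killed_nonneg k y) (Real.exp_pos _).le),
    integral_const_mul, integral_exp_mul_Ioi (neg_lt_zero.2 (M.γ_pos y))]
  congr 1
  simp [div_eq_mul_inv]

lemma sum_indicator_killedEvent {β : Type*} [AddCommMonoid β] (k : ℕ) (g : M.Ω → β)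
    (ω : M.Ω) : ∑ y ∈ S, (M.killedEvent S k y).indicator g ω
      = {ω | ∀ i ≤ k, M.jump i ω ∈ S}.indicator g ω := by
  by_cases h : ∀ i ≤ k, M.jump i ω ∈ S
  · rw [indicator_of_mem (s := {ω | ∀ i ≤ k, M.jump i ω ∈ S}) h,
      sum_eq_single_of_mem _ (h k le_rfl)]
    · exact indicator_of_mem (s := M.killedEvent S k _) ⟨fun i hi => h i hi.le, rfl⟩ g
    · exact fun y _ hy => indicator_of_notMem (fun hω => hy hω.2.symm) g
  · rw [indicator_of_notMem (s := {ω | ∀ i ≤ k, M.jump i ω ∈ S}) h]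
    refine sum_eq_zero fun y hy =>
      indicator_of_notMem (s := M.killedEvent S k y) (fun ⟨hS, hk⟩ => h fun i hi => ?_) g
    rcases hi.lt_or_eq with hi | rfl
    exacts [hS i hi, hk ▸ hy]

lemma sum_indicator_hold_le_J {n j : ℕ} {ω : M.Ω} (hj : M.jump j ω ∉ S) :
    ∑ k ∈ range n,
      {ω | ∀ i ≤ k, M.jump i ω ∈ S}.indicator (fun ω => ENNReal.ofReal (M.hold k ω)) ω
      ≤ ENNReal.ofReal (M.J j ω) := by
  rw [J, ENNReal.ofReal_sum_of_nonneg fun k _ => (M.hold_pos k ω).le,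
    ← sum_filter_of_ne (p := (· < j)) fun k _ hk => not_le.1 fun hjk =>
      hk (indicator_of_notMem (fun (h : ∀ i ≤ k, M.jump i ω ∈ S) => hj (h j hjk)) _)]
  refine (sum_le_sum_of_subset fun k hk => ?_).trans
    (sum_le_sum fun k _ => indicator_le_self _ _ _)
  simp only [mem_filter, Finset.mem_range] at hk ⊢
  exact hk.2

lemma exists_J_le_of_pos_eq_some {s : ℝ} {ω : M.Ω} {y : M.X} (h : M.pos s ω = some y) :
    ∃ j, M.J j ω ≤ s ∧ M.jump j ω = y := by
  unfold pos at h
  split_ifs at h with hex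
  exact ⟨hex.choose, hex.choose_spec.1, Option.some.inj h⟩

lemma sum_indicator_hold_le_tau {A : Set M.X} (hSA : ∀ x ∈ S, x ∉ A) (n : ℕ) (ω : M.Ω) :
    ∑ k ∈ range n,
      {ω | ∀ i ≤ k, M.jump i ω ∈ S}.indicator (fun ω => ENNReal.ofReal (M.hold k ω)) ω
      ≤ M.tau A ω := by
  refine le_sInf ?_
  rintro _ ⟨s, ⟨-, y, hyA, hpos⟩, rfl⟩
  obtain ⟨j, hJ, rfl⟩ := exists_J_le_of_pos_eq_some hpos
  exact (sum_indicator_hold_le_J fun hS => hSA _ hS hyA).trans (ENNReal.ofReal_le_ofReal hJ)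

theorem occupation_le_of_lintegral_tau_le {A : Set M.X} (hSA : ∀ x ∈ S, x ∉ A) {K : ℝ}
    (hK : 0 ≤ K) (hτ : ∫⁻ ω, M.tau A ω ∂M.μ x₀ ≤ ENNReal.ofReal K) (n : ℕ) :
    M.occupation S x₀ n ≤ K := by
  have hmeas : ∀ k y, Measurable
      ((M.killedEvent S k y).indicator fun ω => ENNReal.ofReal (M.hold k ω)) :=
    fun k y => (M.hold_meas k).ennreal_ofReal.indicator (measurableSet_killedEvent k y)
  rw [← ENNReal.ofReal_le_ofReal_iff hK]
  calc ENNReal.ofReal (M.occupation S x₀ n)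
      = ∑ k ∈ range n, ∑ y ∈ S,
          ∫⁻ ω in M.killedEvent S k y, ENNReal.ofReal (M.hold k ω) ∂M.μ x₀ := by
        simp only [setLIntegral_killedEvent_hold, occupation]
        rw [ENNReal.ofReal_sum_of_nonneg fun k _ => sum_nonneg fun y _ =>
          div_nonneg (killed_nonneg k y) (M.γ_pos y).le]
        exact sum_congr rfl fun k _ => ENNReal.ofReal_sum_of_nonneg fun y _ =>
          div_nonneg (killed_nonneg k y) (M.γ_pos y).le
    _ = ∫⁻ ω, ∑ k ∈ range n, ∑ y ∈ S,
          (M.killedEvent S k y).indicator (fun ω => ENNReal.ofReal (M.hold k ω)) ω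
          ∂M.μ x₀ := by
        rw [lintegral_finsetSum _ fun k _ => Finset.measurable_sum _ fun y _ => hmeas k y]
        refine sum_congr rfl fun k _ => ?_
        rw [lintegral_finsetSum _ fun y _ => hmeas k y]
        exact sum_congr rfl fun y _ =>
          (lintegral_indicator (measurableSet_killedEvent k y) _).symm
    _ ≤ ∫⁻ ω, M.tau A ω ∂M.μ x₀ := lintegral_mono fun ω => by
        simp only [sum_indicator_killedEvent]
        exact sum_indicator_hold_le_tau hSA n ω
    _ ≤ ENNReal.ofReal K := hτ

theorem le_add_of_occupation_le {f : M.X → ℝ} {a b c ε r K : ℝ} (hf : M.InDomPos f)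
    (hfr : M.InDom fun y => f y ^ r) (ha : 0 ≤ a) (hc : 0 ≤ c) (hε : 0 ≤ ε) (hr : 1 < r)
    (hdrift1 : ∀ x, a < f x → -ε ≤ M.gen f x)
    (hdrift2 : ∀ x, a < f x → M.gen (fun y => f y ^ r) x ≤ c * f x ^ (r - 1))
    (hb : b ^ (r - 1) = f x₀ ^ r) (hS : ∀ y, y ∈ S ↔ a < f y ∧ f y ≤ b)
    (hx₀ : x₀ ∈ S) (hocc : ∀ n, M.occupation S x₀ n ≤ K) :
    f x₀ ≤ a + 1 + (c + ε) * K := by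
  obtain ⟨hax₀, hx₀b⟩ := (hS x₀).1 hx₀
  have hbpos : 0 < b := by linarith
  have hgen : ∀ x ∈ S, M.gen (lyapunov f a r (b ^ (r - 1))) x ≤ c + ε := fun x hx => by
    obtain ⟨hax, hxb⟩ := (hS x).1 hx
    have h1 := hdrift1 x hax
    have h2 : M.gen (fun y => f y ^ r) x / b ^ (r - 1) ≤ c :=
      (div_le_iff₀ (by positivity)).2 ((hdrift2 x hax).trans (by gcongr; exact hf.1 x))
    rw [gen_lyapunov hf.2 hfr]
    linarith
  have hout : ∀ y ∉ S, f y ≤ a ∨ b < f y := fun y hy => by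
    rwa [hS, not_and_or, not_lt, not_le] at hy
  have key := (inDom_lyapunov hf.2 hfr).neg_le_mul_of_gen_le hx₀ (by positivity) hgen
    (fun y hy => neg_le_lyapunov ha (hf.1 y) ((hS y).1 hy).2)
    (fun y hy => lyapunov_nonneg ha (hf.1 y) hbpos hr.le (hout y hy)) hocc
  have hF : f x₀ ^ r ≠ 0 := (Real.rpow_pos_of_pos (by linarith) r).ne'
  rw [lyapunov, hb, div_self hF] at key
  linarith

end CTMC

open CTMC in
theorem statement8_general (M : CTMC)
    (f : M.X → ℝ) (hf : M.InDomPos f) (hfinf : M.FinSublevels f)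
    (a c ε r : ℝ) (ha : 0 < a) (hc : 0 < c) (hε : 0 < ε) (hr : 1 < r)
    (hfr : M.InDomPos fun x => f x ^ r)
    (hdrift1 : ∀ x : M.X, a < f x → -ε ≤ M.gen f x)
    (hdrift2 : ∀ x : M.X, a < f x → M.gen (fun y => f y ^ r) x ≤ c * f x ^ (r - 1)) :
    ¬ ∃ K : ℝ, 0 < K ∧ ∀ x : M.X, a < f x →
      ∫⁻ ω, M.tau {y | f y ≤ a} ω ∂ M.μ x ≤ ENNReal.ofReal K := by
  rintro ⟨K, hK, hbound⟩
  obtain ⟨x₀, hx₀⟩ : ∃ x₀, max (a + 1 + (c + ε) * K) 1 < f x₀ := by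
    simpa only [Set.Nonempty, mem_compl_iff, mem_ofPred_eq, not_le]
      using (hfinf _).infinite_compl.nonempty
  have hfx₀ : 1 ≤ f x₀ := (le_max_right _ _).trans hx₀.le
  have hax₀ : a < f x₀ := by
    have : 0 ≤ (c + ε) * K := by positivity
    linarith [le_max_left (a + 1 + (c + ε) * K) 1]
  set b := f x₀ ^ (r / (r - 1))
  have hb : b ^ (r - 1) = f x₀ ^ r := by
    rw [← Real.rpow_mul (by linarith), div_mul_cancel₀ _ (by linarith)]
  have hx₀b : f x₀ ≤ b :=
    Real.self_le_rpow_of_one_le hfx₀ ((one_le_div (by linarith)).2 (by linarith))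
  set S := ((hfinf b).subset fun y (hy : a < f y ∧ f y ≤ b) => hy.2).toFinset
  have hS : ∀ y, y ∈ S ↔ a < f y ∧ f y ≤ b := fun y => Set.Finite.mem_toFinset _
  have hocc := occupation_le_of_lintegral_tau_le (S := S)
    (fun x hx (hxa : f x ≤ a) => ((hS x).1 hx).1.not_ge hxa) hK.le (hbound x₀ hax₀)
  have := le_add_of_occupation_le hf hfr.2 ha.le hc.le hε.le hr hdrift1 hdrift2 hb hS
    ((hS x₀).2 ⟨hax₀, hx₀b⟩) hocc
  linarith [le_max_left (a + 1 + (c + ε) * K) 1]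

open CTMC in
/-- Theorem (implosion, part 2): under the stated drift conditions the chain
does not implode towards the sublevel set `{f ≤ a}`: there is no uniform
bound `K` on `E_x τ_{{f ≤ a}}` over `x ∉ {f ≤ a}`. -/
theorem statement8 (M : CTMC) (hrec : M.JumpRecurrent)
    (f : M.X → ℝ) (hf : M.InDomPos f) (hfinf : M.FinSublevels f)
    (a c ε r : ℝ) (ha : 0 < a) (hc : 0 < c) (hε : 0 < ε) (hr : 1 < r)
    (hfr : M.InDomPos fun x => f x ^ r)
    (hdrift1 : ∀ x : M.X, a < f x → -ε ≤ M.gen f x)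
    (hdrift2 : ∀ x : M.X, a < f x → M.gen (fun y => f y ^ r) x ≤ c * f x ^ (r - 1)) :
    ¬ ∃ K : ℝ, 0 < K ∧ ∀ x : M.X, a < f x →
      ∫⁻ ω, M.tau {y | f y ≤ a} ω ∂ M.μ x ≤ ENNReal.ofReal K :=
  statement8_general M f hf hfinf a c ε r ha hc hε hr hfr hdrift1 hdrift2
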